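/- arXiv:1110.0262 — 4 statements merged into one kernel-verified Lean document; each statement's English description precedes it below -/
import Mathlib

section
/- Let (X_n) be i.i.d. integer-valued random variables with E[X_1] < 0 and geometric right tail P(X_1 ≥ x) = ξ·r^x for integers x ≥ 0 (0 < ξ < 1, 0 < r < 1), and let S_n = X_1 + ⋯ + X_n, S_0 = 0. Let p = P(sup_n S_n > 0). Then p < 1, and for every integer x ≥ 0: P(sup_{n≥0} S_n > x) = p·(1 - (1-p)(1-r))^x. -/
/-!
Let `A x` be the event that the walk ever exceeds `x`, split according to the first time `n` at
which `S n > x`. Since the right tail of a step is geometric, the overshoot is memoryless: given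
the past up to that time, `S n ≥ x + 2` with probability `r`. So the walk exceeds `x + 1` either by
overshooting (probability `r`), or by landing on `x + 1` and then having the walk restarted at
time `n` (independent of the past, with the law of the original walk) become positive
(probability `(1 - r) p`). Hence `P(A (x + 1)) = (r + (1 - r) p) P(A x)`. The strong law of large
numbers gives `S n → -∞` almost surely, so `P(A x) → 0`, which rules out `p = 1`.
-/

open MeasureTheory ProbabilityTheory Filter Topology

section Memoryless

variable {Ω : Type*} {mΩ : MeasurableSpace Ω} {μ : Measure Ω}

lemma ProbabilityTheory.Indep.measure_inter_add_one_le {m m' : MeasurableSpace Ω} (hm : m ≤ mΩ)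
    (hm' : m' ≤ mΩ) (hind : Indep m m' μ) {Z Y : Ω → ℤ} (hZ : Measurable[m] Z)
    (hY : Measurable[m'] Y) {F : Set Ω} (hF : MeasurableSet[m] F) (hZF : ∀ ω ∈ F, 0 ≤ Z ω)
    {ρ : ENNReal} (hρ : ∀ a : ℤ, 0 ≤ a → μ {ω | a + 1 ≤ Y ω} = ρ * μ {ω | a ≤ Y ω}) :
    μ (F ∩ {ω | Z ω + 1 ≤ Y ω}) = ρ * μ (F ∩ {ω | Z ω ≤ Y ω}) := by
  have hslice (k u : ℤ) : μ ((F ∩ {ω | Z ω = u}) ∩ {ω | u + k ≤ Y ω})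
      = μ (F ∩ {ω | Z ω = u}) * μ {ω | u + k ≤ Y ω} :=
    (Indep_iff _ _ _).1 hind _ _ (hF.inter (hZ (measurableSet_singleton u)))
      (measurableSet_le measurable_const hY)
  have hsplit (k : ℤ) : μ (F ∩ {ω | Z ω + k ≤ Y ω})
      = ∑' u : ℤ, μ (F ∩ {ω | Z ω = u}) * μ {ω | u + k ≤ Y ω} := by
    have hU : F ∩ {ω | Z ω + k ≤ Y ω} = ⋃ u : ℤ, (F ∩ {ω | Z ω = u}) ∩ {ω | u + k ≤ Y ω} := by
      ext ω; simp
    rw [hU, measure_iUnion, tsum_congr (hslice k)]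
    · intro u v huv
      exact Set.disjoint_left.2 fun ω hu hv => huv (hu.1.2.symm.trans hv.1.2)
    · exact fun u => (hm _ (hF.inter (hZ (measurableSet_singleton u)))).inter
        (hm' _ (measurableSet_le measurable_const hY))
  have hterm (u : ℤ) : μ (F ∩ {ω | Z ω = u}) * μ {ω | u + 1 ≤ Y ω}
      = ρ * (μ (F ∩ {ω | Z ω = u}) * μ {ω | u + 0 ≤ Y ω}) := by
    rcases lt_or_ge u 0 with hu | hu
    · have : F ∩ {ω | Z ω = u} = ∅ := by
        ext ω
        simp only [Set.mem_inter_iff, Set.mem_ofPred_eq, Set.mem_empty_iff_false, iff_false]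
        rintro ⟨hωF, rfl⟩
        exact absurd (hZF ω hωF) (not_le.2 hu)
      simp [this]
    · rw [hρ u hu, add_zero]; ring
  rw [hsplit 1, tsum_congr hterm, ENNReal.tsum_mul_left, ← hsplit 0]
  simp only [add_zero]

end Memoryless

section IIDSequence

variable {Ω β : Type*} {mΩ : MeasurableSpace Ω} {μ : Measure Ω} [mβ : MeasurableSpace β]
  {X : ℕ → Ω → β}

abbrev pastSigma (X : ℕ → Ω → β) (n : ℕ) : MeasurableSpace Ω := ⨆ i < n, mβ.comap (X i)

abbrev futureSigma (X : ℕ → Ω → β) (n : ℕ) : MeasurableSpace Ω := ⨆ i ≥ n, mβ.comap (X i)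

lemma pastSigma_le (hmeas : ∀ n, Measurable (X n)) (n : ℕ) : pastSigma X n ≤ mΩ :=
  iSup₂_le fun i _ => (hmeas i).comap_le

lemma futureSigma_le (hmeas : ∀ n, Measurable (X n)) (n : ℕ) : futureSigma X n ≤ mΩ :=
  iSup₂_le fun i _ => (hmeas i).comap_le

lemma measurable_pastSigma {i n : ℕ} (hi : i < n) : Measurable[pastSigma X n] (X i) :=
  (comap_measurable (X i)).mono (le_iSup₂ (f := fun j (_ : j < n) => mβ.comap (X j)) i hi) le_rfl

lemma measurable_futureSigma {i n : ℕ} (hi : n ≤ i) : Measurable[futureSigma X n] (X i) :=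
  (comap_measurable (X i)).mono (le_iSup₂ (f := fun j (_ : j ≥ n) => mβ.comap (X j)) i hi) le_rfl

lemma ProbabilityTheory.iIndepFun.indep_pastSigma_futureSigma (hmeas : ∀ n, Measurable (X n))
    (hindep : iIndepFun X μ) (n : ℕ) : Indep (pastSigma X n) (futureSigma X n) μ :=
  indep_iSup_of_disjoint (fun i => (hmeas i).comap_le) ((iIndepFun_iff_iIndep _ _ _).1 hindep)
    (Set.Iio_disjoint_Ici le_rfl)

lemma ProbabilityTheory.iIndepFun.map_shift_eq (hmeas : ∀ n, Measurable (X n))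
    (hindep : iIndepFun X μ) (hident : ∀ n, μ.map (X n) = μ.map (X 0)) (n : ℕ) :
    μ.map (fun ω i => X (n + i) ω) = μ.map (fun ω i => X i ω) := by
  rw [(hindep.precomp (add_right_injective n)).map_fun_eq_infinitePi_map fun i => hmeas (n + i),
    hindep.map_fun_eq_infinitePi_map hmeas]
  simp only [hident]

end IIDSequence

section RandomWalk

variable {Ω : Type*} {mΩ : MeasurableSpace Ω} {μ : Measure Ω} {X : ℕ → Ω → ℤ}

def partialSum (X : ℕ → Ω → ℤ) (n : ℕ) (ω : Ω) : ℤ := ∑ i ∈ Finset.range n, X i ω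

def crossing (X : ℕ → Ω → ℤ) (x : ℤ) : Set Ω := {ω | ∃ n, x < partialSum X n ω}

def firstPassage (X : ℕ → Ω → ℤ) (x : ℤ) (n : ℕ) : Set Ω :=
  {ω | x < partialSum X n ω ∧ ∀ i < n, partialSum X i ω ≤ x}

lemma partialSum_zero (ω : Ω) : partialSum X 0 ω = 0 := Finset.sum_range_zero _

lemma partialSum_succ (n : ℕ) (ω : Ω) : partialSum X (n + 1) ω = partialSum X n ω + X n ω :=
  Finset.sum_range_succ _ n

lemma partialSum_add (n m : ℕ) (ω : Ω) :
    partialSum X (n + m) ω = partialSum X n ω + partialSum (fun i => X (n + i)) m ω :=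
  Finset.sum_range_add _ n m

lemma measurable_partialSum {m : MeasurableSpace Ω} {n : ℕ} (h : ∀ i < n, Measurable[m] (X i)) :
    Measurable[m] (partialSum X n) :=
  Finset.measurable_sum _ fun i hi => h i (Finset.mem_range.1 hi)

lemma measurableSet_crossing {m : MeasurableSpace Ω} (h : ∀ i, Measurable[m] (X i)) (x : ℤ) :
    MeasurableSet[m] (crossing X x) := by
  have : crossing X x = ⋃ n, {ω | x < partialSum X n ω} := by ext; simp [crossing]
  rw [this]
  exact MeasurableSet.iUnion fun n =>
    measurableSet_lt measurable_const (measurable_partialSum fun i _ => h i)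

lemma measurableSet_firstPassage (x : ℤ) (n : ℕ) :
    MeasurableSet[pastSigma X n] (firstPassage X x n) := by
  have hS {i : ℕ} (hi : i ≤ n) : Measurable[pastSigma X n] (partialSum X i) :=
    measurable_partialSum fun j hj => measurable_pastSigma (by omega)
  have : firstPassage X x n
      = {ω | x < partialSum X n ω} ∩ ⋂ i ∈ Set.Iio n, {ω | partialSum X i ω ≤ x} := by
    ext; simp [firstPassage]
  rw [this]
  exact (measurableSet_lt measurable_const (hS le_rfl)).inter <|
    MeasurableSet.biInter (Set.to_countable _) fun i hi =>
      measurableSet_le (hS (le_of_lt hi)) measurable_const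

lemma crossing_antitone : Antitone (crossing X) :=
  fun _ _ hxy _ ⟨n, hn⟩ => ⟨n, hxy.trans_lt hn⟩

lemma crossing_eq_iUnion_firstPassage (x : ℤ) : crossing X x = ⋃ n, firstPassage X x n := by
  classical
  ext ω
  simp only [crossing, firstPassage, Set.mem_ofPred_eq, Set.mem_iUnion]
  constructor
  · intro h
    exact ⟨Nat.find h, Nat.find_spec h, fun i hi => not_lt.1 (Nat.find_min h hi)⟩
  · exact fun ⟨n, hn, _⟩ => ⟨n, hn⟩

lemma pairwise_disjoint_firstPassage (x : ℤ) :
    Pairwise (Function.onFun Disjoint (firstPassage X x)) := by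
  refine pairwise_disjoint_on _ |>.2 fun n m hnm => Set.disjoint_left.2 fun ω hn hm => ?_
  exact (hm.2 n hnm).not_gt hn.1

lemma firstPassage_zero {x : ℤ} (hx : 0 ≤ x) : firstPassage X x 0 = ∅ := by
  ext ω
  simp [firstPassage, partialSum_zero, hx]

lemma crossing_succ_inter_firstPassage (x : ℤ) (n : ℕ) :
    crossing X (x + 1) ∩ firstPassage X x n
      = firstPassage X x n ∩ {ω | x + 2 ≤ partialSum X n ω}
        ∪ firstPassage X x n ∩ {ω | partialSum X n ω = x + 1}
          ∩ crossing (fun i => X (n + i)) 0 := by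
  ext ω
  simp only [crossing, firstPassage, Set.mem_inter_iff, Set.mem_union, Set.mem_ofPred_eq]
  constructor
  · rintro ⟨⟨m, hm⟩, hlt, hle⟩
    by_cases h2 : x + 2 ≤ partialSum X n ω
    · exact Or.inl ⟨⟨hlt, hle⟩, h2⟩
    have hnm : n ≤ m := not_lt.1 fun h => by have := hle m h; omega
    obtain ⟨k, rfl⟩ := Nat.exists_eq_add_of_le hnm
    rw [partialSum_add] at hm
    exact Or.inr ⟨⟨⟨hlt, hle⟩, by omega⟩, k, by omega⟩
  · rintro (⟨⟨hlt, hle⟩, h2⟩ | ⟨⟨⟨hlt, hle⟩, h1⟩, k, hk⟩)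
    · exact ⟨⟨n, by omega⟩, hlt, hle⟩
    · exact ⟨⟨n + k, by rw [partialSum_add]; omega⟩, hlt, hle⟩

end RandomWalk

section IIDWalk

variable {Ω : Type*} {mΩ : MeasurableSpace Ω} {μ : Measure Ω} {X : ℕ → Ω → ℤ}

lemma measure_add_one_le_of_geometric_tail [IsFiniteMeasure μ] (hmeas : ∀ n, Measurable (X n))
    (hident : ∀ n, μ.map (X n) = μ.map (X 0)) {ξ r : ℝ} (hr : 0 ≤ r)
    (htail : ∀ x : ℕ, (μ {ω | (x : ℤ) ≤ X 0 ω}).toReal = ξ * r ^ x) (n : ℕ) (a : ℤ)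
    (ha : 0 ≤ a) : μ {ω | a + 1 ≤ X n ω} = ENNReal.ofReal r * μ {ω | a ≤ X n ω} := by
  have hlevel (c : ℤ) : μ {ω | c ≤ X n ω} = μ {ω | c ≤ X 0 ω} :=
    (IdentDistrib.mk (hmeas n).aemeasurable (hmeas 0).aemeasurable (hident n)).measure_mem_eq
      measurableSet_Ici
  rw [hlevel, hlevel]
  lift a to ℕ using ha
  rw [← ENNReal.ofReal_toReal (measure_ne_top μ {ω | (a : ℤ) + 1 ≤ X 0 ω}),
    ← ENNReal.ofReal_toReal (measure_ne_top μ {ω | (a : ℤ) ≤ X 0 ω}), ← ENNReal.ofReal_mul hr]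
  have hsucc := htail (a + 1)
  push_cast at hsucc
  rw [hsucc, htail a, pow_succ]
  ring_nf

lemma measure_crossing_shift (hmeas : ∀ n, Measurable (X n)) (hindep : iIndepFun X μ)
    (hident : ∀ n, μ.map (X n) = μ.map (X 0)) (n : ℕ) (x : ℤ) :
    μ (crossing (fun i => X (n + i)) x) = μ (crossing X x) := by
  have hpath : MeasurableSet (crossing (fun i (y : ℕ → ℤ) => y i) x) :=
    measurableSet_crossing (fun i => measurable_pi_apply i) x
  have hlaw (Y : ℕ → Ω → ℤ) (hY : ∀ i, Measurable (Y i)) :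
      μ (crossing Y x) = μ.map (fun ω i => Y i ω) (crossing (fun i (y : ℕ → ℤ) => y i) x) :=
    (Measure.map_apply (measurable_pi_lambda _ hY) hpath).symm
  rw [hlaw _ fun i => hmeas (n + i), hindep.map_shift_eq hmeas hident, ← hlaw X hmeas]

lemma measure_inter_crossing_shift (hmeas : ∀ n, Measurable (X n)) (hindep : iIndepFun X μ)
    (hident : ∀ n, μ.map (X n) = μ.map (X 0)) {n : ℕ} {F : Set Ω}
    (hF : MeasurableSet[pastSigma X n] F) :
    μ (F ∩ crossing (fun i => X (n + i)) 0) = μ F * μ (crossing X 0) := by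
  rw [(Indep_iff _ _ _).1 (hindep.indep_pastSigma_futureSigma hmeas n) _ _ hF
    (measurableSet_crossing (fun i => measurable_futureSigma (by omega)) 0),
    measure_crossing_shift hmeas hindep hident]

variable {ρ : ENNReal}

lemma measure_firstPassage_inter_le (hmeas : ∀ n, Measurable (X n)) (hindep : iIndepFun X μ)
    (hgeom : ∀ n (a : ℤ), 0 ≤ a → μ {ω | a + 1 ≤ X n ω} = ρ * μ {ω | a ≤ X n ω})
    {x : ℤ} (hx : 0 ≤ x) (n : ℕ) :
    μ (firstPassage X x n ∩ {ω | x + 2 ≤ partialSum X n ω}) = ρ * μ (firstPassage X x n) := by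
  rcases n with _ | m
  · simp [firstPassage_zero hx]
  set F := {ω | ∀ i ≤ m, partialSum X i ω ≤ x}
  set Z := fun ω => x + 1 - partialSum X m ω
  have hF : MeasurableSet[pastSigma X m] F := by
    have : F = ⋂ i ∈ Set.Iic m, {ω | partialSum X i ω ≤ x} := by ext; simp [F]
    rw [this]
    exact MeasurableSet.biInter (Set.to_countable _) fun i hi => measurableSet_le
      (measurable_partialSum fun j hj => measurable_pastSigma (lt_of_lt_of_le hj hi))
      measurable_const
  have hZ : Measurable[pastSigma X m] Z :=
    measurable_const.sub (measurable_partialSum fun j hj => measurable_pastSigma hj)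
  have hZF : ∀ ω ∈ F, 0 ≤ Z ω := fun ω hω => by simp only [Z]; linarith [hω m le_rfl]
  have hE : firstPassage X x (m + 1) = F ∩ {ω | Z ω ≤ X m ω} := by
    ext ω
    simp only [firstPassage, F, Z, partialSum_succ, Nat.lt_succ_iff, Set.mem_inter_iff,
      Set.mem_ofPred_eq]
    constructor <;> rintro ⟨h1, h2⟩ <;> exact ⟨by omega, by omega⟩
  have hE2 : firstPassage X x (m + 1) ∩ {ω | x + 2 ≤ partialSum X (m + 1) ω}
      = F ∩ {ω | Z ω + 1 ≤ X m ω} := by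
    rw [hE]
    ext ω
    simp only [Z, partialSum_succ, Set.mem_inter_iff, Set.mem_ofPred_eq]
    constructor
    · rintro ⟨⟨h1, h2⟩, h3⟩; exact ⟨h1, by omega⟩
    · rintro ⟨h1, h2⟩; exact ⟨⟨h1, by omega⟩, by omega⟩
  rw [hE2, hE]
  exact (hindep.indep_pastSigma_futureSigma hmeas m).measure_inter_add_one_le
    (pastSigma_le hmeas m) (futureSigma_le hmeas m) hZ (measurable_futureSigma le_rfl) hF hZF
    (hgeom m)

lemma measure_firstPassage_inter_eq [IsFiniteMeasure μ] (hmeas : ∀ n, Measurable (X n))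
    (hindep : iIndepFun X μ)
    (hgeom : ∀ n (a : ℤ), 0 ≤ a → μ {ω | a + 1 ≤ X n ω} = ρ * μ {ω | a ≤ X n ω})
    {x : ℤ} (hx : 0 ≤ x) (n : ℕ) :
    μ (firstPassage X x n ∩ {ω | partialSum X n ω = x + 1})
      = (1 - ρ) * μ (firstPassage X x n) := by
  have hdiff : firstPassage X x n ∩ {ω | partialSum X n ω = x + 1}
      = firstPassage X x n \ (firstPassage X x n ∩ {ω | x + 2 ≤ partialSum X n ω}) := by
    ext ω
    simp only [firstPassage, Set.mem_inter_iff, Set.mem_sdiff, Set.mem_ofPred_eq]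
    constructor
    · rintro ⟨⟨h1, h2⟩, h3⟩; exact ⟨⟨h1, h2⟩, fun ⟨_, h⟩ => by omega⟩
    · rintro ⟨⟨h1, h2⟩, h3⟩
      refine ⟨⟨h1, h2⟩, ?_⟩
      by_contra hne
      exact h3 ⟨⟨h1, h2⟩, by omega⟩
  have hmeasE : MeasurableSet (firstPassage X x n) :=
    pastSigma_le hmeas n _ (measurableSet_firstPassage x n)
  rw [hdiff, measure_sdiff Set.inter_subset_left
    (hmeasE.inter (measurableSet_le measurable_const
      (measurable_partialSum fun i _ => hmeas i))).nullMeasurableSet (measure_ne_top _ _),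
    measure_firstPassage_inter_le hmeas hindep hgeom hx,
    ENNReal.sub_mul fun _ _ => measure_ne_top _ _, one_mul]

lemma measure_crossing_succ [IsFiniteMeasure μ] (hmeas : ∀ n, Measurable (X n))
    (hindep : iIndepFun X μ) (hident : ∀ n, μ.map (X n) = μ.map (X 0))
    (hgeom : ∀ n (a : ℤ), 0 ≤ a → μ {ω | a + 1 ≤ X n ω} = ρ * μ {ω | a ≤ X n ω})
    {x : ℤ} (hx : 0 ≤ x) :
    μ (crossing X (x + 1)) = (ρ + (1 - ρ) * μ (crossing X 0)) * μ (crossing X x) := by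
  have hmeasE (n : ℕ) : MeasurableSet (firstPassage X x n) :=
    pastSigma_le hmeas n _ (measurableSet_firstPassage x n)
  have hS (n : ℕ) : Measurable (partialSum X n) := measurable_partialSum fun i _ => hmeas i
  have hslice (n : ℕ) : μ (crossing X (x + 1) ∩ firstPassage X x n)
      = (ρ + (1 - ρ) * μ (crossing X 0)) * μ (firstPassage X x n) := by
    have hdisj : Disjoint (firstPassage X x n ∩ {ω | x + 2 ≤ partialSum X n ω})
        (firstPassage X x n ∩ {ω | partialSum X n ω = x + 1}
          ∩ crossing (fun i => X (n + i)) 0) :=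
      Set.disjoint_left.2 fun _ ⟨_, (h2 : x + 2 ≤ _)⟩ ⟨⟨_, (h1 : _ = x + 1)⟩, _⟩ => by omega
    rw [crossing_succ_inter_firstPassage, measure_union hdisj
      (((hmeasE n).inter (hS n (measurableSet_singleton _))).inter
        (measurableSet_crossing (fun i => hmeas _) 0)),
      measure_firstPassage_inter_le hmeas hindep hgeom hx,
      measure_inter_crossing_shift hmeas hindep hident
        (F := firstPassage X x n ∩ {ω | partialSum X n ω = x + 1})
        ((measurableSet_firstPassage x n).inter ((measurable_partialSum fun i hi =>
          measurable_pastSigma hi) (measurableSet_singleton _))),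
      measure_firstPassage_inter_eq hmeas hindep hgeom hx]
    ring
  have hdisj :
      Pairwise (Function.onFun Disjoint fun n => crossing X (x + 1) ∩ firstPassage X x n) :=
    fun n m hnm => (pairwise_disjoint_firstPassage x hnm).mono Set.inter_subset_right
      Set.inter_subset_right
  calc μ (crossing X (x + 1))
      = μ (⋃ n, crossing X (x + 1) ∩ firstPassage X x n) := by
        rw [← Set.inter_iUnion, ← crossing_eq_iUnion_firstPassage,
          Set.inter_eq_left.2 (crossing_antitone (le_add_of_nonneg_right zero_le_one))]
    _ = ∑' n, μ (crossing X (x + 1) ∩ firstPassage X x n) :=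
        measure_iUnion hdisj fun n => (measurableSet_crossing hmeas _).inter (hmeasE n)
    _ = (ρ + (1 - ρ) * μ (crossing X 0)) * μ (crossing X x) := by
        rw [tsum_congr hslice, ENNReal.tsum_mul_left, crossing_eq_iUnion_firstPassage x,
          measure_iUnion (pairwise_disjoint_firstPassage x) hmeasE]

lemma measure_crossing_natCast [IsFiniteMeasure μ] (hmeas : ∀ n, Measurable (X n))
    (hindep : iIndepFun X μ) (hident : ∀ n, μ.map (X n) = μ.map (X 0))
    (hgeom : ∀ n (a : ℤ), 0 ≤ a → μ {ω | a + 1 ≤ X n ω} = ρ * μ {ω | a ≤ X n ω}) (x : ℕ) :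
    μ (crossing X x) = (ρ + (1 - ρ) * μ (crossing X 0)) ^ x * μ (crossing X 0) := by
  induction x with
  | zero => simp
  | succ x ih =>
    rw [Nat.cast_succ, measure_crossing_succ hmeas hindep hident hgeom x.cast_nonneg, ih,
      pow_succ]
    ring

end IIDWalk

section Drift

variable {Ω : Type*} {mΩ : MeasurableSpace Ω} {μ : Measure Ω} {X : ℕ → Ω → ℤ}

lemma ae_tendsto_partialSum_atBot (hmeas : ∀ n, Measurable (X n)) (hindep : iIndepFun X μ)
    (hident : ∀ n, μ.map (X n) = μ.map (X 0)) (hint : Integrable (fun ω => (X 0 ω : ℝ)) μ)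
    (hdrift : ∫ ω, (X 0 ω : ℝ) ∂μ < 0) :
    ∀ᵐ ω ∂μ, Tendsto (fun n => partialSum X n ω) atTop atBot := by
  have hcast : Measurable fun z : ℤ => (z : ℝ) := measurable_from_top
  have hslln := strong_law_ae_real (fun n ω => (X n ω : ℝ)) hint
    (fun i j hij => (hindep.indepFun hij).comp hcast hcast)
    (fun i => (IdentDistrib.mk (hmeas i).aemeasurable (hmeas 0).aemeasurable (hident i)).comp
      hcast)
  filter_upwards [hslln] with ω hω
  rw [← tendsto_intCast_atBot_iff (R := ℝ)]
  refine (tendsto_natCast_atTop_atTop.atTop_mul_neg hdrift hω).congr' ?_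
  filter_upwards [eventually_ne_atTop 0] with n hn
  simp [partialSum]
  field_simp

lemma tendsto_measure_crossing_atTop [IsFiniteMeasure μ] (hmeas : ∀ n, Measurable (X n))
    (hindep : iIndepFun X μ) (hident : ∀ n, μ.map (X n) = μ.map (X 0))
    (hint : Integrable (fun ω => (X 0 ω : ℝ)) μ) (hdrift : ∫ ω, (X 0 ω : ℝ) ∂μ < 0) :
    Tendsto (fun x : ℕ => μ (crossing X x)) atTop (𝓝 0) := by
  have hnull : μ (⋂ x : ℕ, crossing X x) = 0 := by
    refine measure_mono_null ?_
      (ae_iff.1 (ae_tendsto_partialSum_atBot hmeas hindep hident hint hdrift))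
    intro ω hω htend
    obtain ⟨M, hM⟩ := bddAbove_range_of_tendsto_atTop_atBot htend
    obtain ⟨n, hn⟩ := Set.mem_iInter.1 hω M.toNat
    exact (hM ⟨n, rfl⟩).not_gt ((Int.self_le_toNat M).trans_lt hn)
  rw [← hnull]
  exact tendsto_measure_iInter_atTop
    (fun x => (measurableSet_crossing hmeas _).nullMeasurableSet)
    (fun x y h => crossing_antitone (Nat.cast_le.2 h)) ⟨0, measure_ne_top μ _⟩

end Drift

theorem stmt_4_general {Ω : Type*} [MeasurableSpace Ω] (μ : Measure Ω) [IsProbabilityMeasure μ]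
    (X : ℕ → Ω → ℤ) (hmeas : ∀ n, Measurable (X n))
    (hindep : iIndepFun X μ)
    (hident : ∀ n, Measure.map (X n) μ = Measure.map (X 0) μ)
    (hint : Integrable (fun ω => (X 0 ω : ℝ)) μ)
    (hdrift : ∫ ω, (X 0 ω : ℝ) ∂μ < 0)
    (ξ r : ℝ) (hr : 0 < r) (hr1 : r < 1)
    (htail : ∀ x : ℕ, (μ {ω | (x : ℤ) ≤ X 0 ω}).toReal = ξ * r ^ x)
    (S : ℕ → Ω → ℤ) (hS : ∀ n ω, S n ω = ∑ i ∈ Finset.range n, X i ω)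
    (p : ℝ) (hp : p = (μ {ω | ∃ n, 0 < S n ω}).toReal) :
    p < 1 ∧
    ∀ x : ℕ,
      (μ {ω | ∃ n, (x : ℤ) < S n ω}).toReal = p * (1 - (1 - p) * (1 - r)) ^ x := by
  obtain rfl : S = partialSum X := funext fun n => funext (hS n)
  replace hp : p = (μ (crossing X 0)).toReal := hp
  have hgeom := measure_add_one_le_of_geometric_tail hmeas hident hr.le htail
  have hrate : (ENNReal.ofReal r + (1 - ENNReal.ofReal r) * μ (crossing X 0)).toReal
      = 1 - (1 - p) * (1 - r) := by
    rw [ENNReal.toReal_add ENNReal.ofReal_ne_top (by finiteness), ENNReal.toReal_mul,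
      ENNReal.toReal_sub_of_le (ENNReal.ofReal_le_one.2 hr1.le) ENNReal.one_ne_top,
      ENNReal.toReal_ofReal hr.le, ENNReal.toReal_one, ← hp]
    ring
  have hform (x : ℕ) : (μ (crossing X x)).toReal = p * (1 - (1 - p) * (1 - r)) ^ x := by
    rw [measure_crossing_natCast hmeas hindep hident hgeom, ENNReal.toReal_mul,
      ENNReal.toReal_pow, hrate, ← hp, mul_comm]
  refine ⟨?_, hform⟩
  by_contra! hp1
  have hp_eq : p = 1 := le_antisymm (hp ▸ measureReal_le_one) hp1
  have hlim := (ENNReal.tendsto_toReal ENNReal.zero_ne_top).comp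
    (tendsto_measure_crossing_atTop hmeas hindep hident hint hdrift)
  simp only [Function.comp_def, hform, hp_eq] at hlim
  norm_num at hlim

theorem stmt_4 {Ω : Type*} [MeasurableSpace Ω] (μ : Measure Ω) [IsProbabilityMeasure μ]
    (X : ℕ → Ω → ℤ) (hmeas : ∀ n, Measurable (X n))
    (hindep : iIndepFun X μ)
    (hident : ∀ n, Measure.map (X n) μ = Measure.map (X 0) μ)
    (hint : Integrable (fun ω => (X 0 ω : ℝ)) μ)
    (hdrift : ∫ ω, (X 0 ω : ℝ) ∂μ < 0)
    (ξ r : ℝ) (hξ : 0 < ξ) (hξ1 : ξ < 1) (hr : 0 < r) (hr1 : r < 1)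
    (htail : ∀ x : ℕ, (μ {ω | (x : ℤ) ≤ X 0 ω}).toReal = ξ * r ^ x)
    (S : ℕ → Ω → ℤ) (hS : ∀ n ω, S n ω = ∑ i ∈ Finset.range n, X i ω)
    (p : ℝ) (hp : p = (μ {ω | ∃ n, 0 < S n ω}).toReal) :
    p < 1 ∧
    ∀ x : ℕ,
      (μ {ω | ∃ n, (x : ℤ) < S n ω}).toReal = p * (1 - (1 - p) * (1 - r)) ^ x :=
  stmt_4_general μ X hmeas hindep hident hint hdrift ξ r hr hr1 htail S hS p hp
end

section
/- For 0 < a < 1, the power series U(s) = Σ_{k=1}^∞ (1/(2k-1))·C(2k-1, k)·(a^{k-1}/(1+a)^{2k-1})·s^k equals ((1+a)/(2a))·(1 - sqrt(1 - 4as/(1+a)^2)) for |s| < 1 + (1-a)^2/(4a). -/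
/-!
With `x = a s / (1 + a)²` the hypothesis on `s` says exactly `|x| < 1/4`, and since
`C(2k+1, k+1) / (2k+1)` is the Catalan number `C_k`, the series is `((1 + a) / a) ∑ C_k x^(k+1)`.
The Catalan generating function `∑ C_k x^(k+1) = (1 - √(1 - 4x)) / 2` is read off from the
binomial series of `√(1 + y)` at `y = -4x`: the coefficients `C(1/2, k+1) (-4)^(k+1)` and `-2 C_k`
agree at `k = 0` and obey the same first-order recurrence.
-/

open Real

theorem Ring.succ_nsmul_choose_succ {R : Type*} [Ring R] [BinomialRing R] (r : R) (n : ℕ) :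
    (n + 1) • Ring.choose r (n + 1) = Ring.choose r n * (r - n) := by
  simpa [Nat.choose_succ_self_right] using Ring.choose_smul_choose r (Nat.le_succ n)

theorem add_two_mul_catalan_succ (n : ℕ) :
    (n + 2) * catalan (n + 1) = 2 * (2 * n + 1) * catalan n := by
  have h := Nat.succ_mul_centralBinom_succ n
  rw [← succ_mul_catalan_eq_centralBinom, ← succ_mul_catalan_eq_centralBinom] at h
  apply Nat.eq_of_mul_eq_mul_left (Nat.succ_pos n)
  linarith

theorem two_mul_add_one_mul_catalan_eq_choose (n : ℕ) :
    (2 * n + 1) * catalan n = (2 * n + 1).choose (n + 1) := by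
  apply Nat.eq_of_mul_eq_mul_right (Nat.succ_pos n)
  rw [← Nat.add_one_mul_choose_eq, mul_assoc, mul_comm (catalan n),
    succ_mul_catalan_eq_centralBinom, Nat.centralBinom]

theorem choose_half_succ_mul_neg_four_pow (n : ℕ) :
    Ring.choose (1 / 2 : ℝ) (n + 1) * (-4) ^ (n + 1) = -2 * catalan n := by
  induction n with
  | zero => norm_num
  | succ n ih =>
    have hcatalan : ((n + 2 : ℕ) : ℝ) * catalan (n + 1) = 2 * (2 * n + 1) * catalan n := by
      exact_mod_cast add_two_mul_catalan_succ n
    have hchoose := Ring.succ_nsmul_choose_succ (1 / 2 : ℝ) (n + 1)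
    rw [nsmul_eq_mul] at hchoose
    push_cast at hcatalan hchoose
    apply mul_left_cancel₀ (by positivity : (n : ℝ) + 2 ≠ 0)
    calc ((n : ℝ) + 2) * (Ring.choose (1 / 2 : ℝ) (n + 1 + 1) * (-4) ^ (n + 1 + 1))
        = ((n + 1 + 1) * Ring.choose (1 / 2 : ℝ) (n + 1 + 1)) * (-4) ^ (n + 1 + 1) := by ring
      _ = (Ring.choose (1 / 2 : ℝ) (n + 1) * (-4) ^ (n + 1)) * (2 * (2 * n + 1)) := by
        rw [hchoose]; ring
      _ = _ := by rw [ih]; linear_combination 2 * hcatalan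

theorem Real.hasSum_sqrt_one_add {y : ℝ} (hy : |y| < 1) :
    HasSum (fun n => Ring.choose (1 / 2 : ℝ) n * y ^ n) (√(1 + y)) := by
  have := (one_add_rpow_hasFPowerSeriesOnBall_zero (a := 1 / 2)).hasSum (y := y)
    (by simpa [edist_dist, dist_eq] using hy)
  rw [sqrt_eq_rpow]
  simpa [binomialSeries, mul_comm] using this

theorem hasSum_catalan_mul_pow_succ {x : ℝ} (hx : |x| < 1 / 4) :
    HasSum (fun n => (catalan n : ℝ) * x ^ (n + 1)) ((1 - √(1 - 4 * x)) / 2) := by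
  have hsqrt := hasSum_sqrt_one_add (y := -4 * x) (by rw [abs_mul]; norm_num; linarith)
  have htail := ((hasSum_nat_add_iff' 1).mpr hsqrt).mul_left (-1 / 2)
  have hterm : (fun n => -1 / 2 * (Ring.choose (1 / 2 : ℝ) (n + 1) * (-4 * x) ^ (n + 1))) =
      fun n => (catalan n : ℝ) * x ^ (n + 1) := by
    funext n
    rw [mul_pow, ← mul_assoc (Ring.choose _ _), choose_half_succ_mul_neg_four_pow]
    ring
  have hvalue : -1 / 2 * (√(1 + -4 * x) -
      ∑ n ∈ Finset.range 1, Ring.choose (1 / 2 : ℝ) n * (-4 * x) ^ n) = (1 - √(1 - 4 * x)) / 2 := by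
    simp only [Finset.sum_range_one, pow_zero, Ring.choose_zero_right, mul_one, ← sub_eq_add_neg,
      neg_mul]
    ring
  rwa [hterm, hvalue] at htail

theorem stmt_14_general (a : ℝ) (ha0 : 0 < a) (s : ℝ)
    (hs : |s| < 1 + (1 - a) ^ 2 / (4 * a)) :
    HasSum
      (fun k : ℕ =>
        (1 / (2 * (k + 1) - 1 : ℝ)) * ((2 * (k + 1) - 1).choose (k + 1) : ℝ) *
          (a ^ k / (1 + a) ^ (2 * (k + 1) - 1)) * s ^ (k + 1))
      (((1 + a) / (2 * a)) * (1 - Real.sqrt (1 - 4 * a * s / (1 + a) ^ 2))) := by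
  have hx : |a * s / (1 + a) ^ 2| < 1 / 4 := by
    have : a * |s| < a * (1 + (1 - a) ^ 2 / (4 * a)) := mul_lt_mul_of_pos_left hs ha0
    rw [abs_div, abs_mul, abs_of_pos ha0, abs_of_nonneg (sq_nonneg (1 + a)),
      div_lt_iff₀ (by positivity)]
    field_simp at this
    linarith
  have hterm : (fun k : ℕ => (1 + a) / a * ((catalan k : ℝ) * (a * s / (1 + a) ^ 2) ^ (k + 1))) =
      fun k : ℕ => (1 / (2 * (k + 1) - 1 : ℝ)) * ((2 * (k + 1) - 1).choose (k + 1) : ℝ) *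
        (a ^ k / (1 + a) ^ (2 * (k + 1) - 1)) * s ^ (k + 1) := by
    funext k
    rw [show 2 * (k + 1) - 1 = 2 * k + 1 by omega, ← two_mul_add_one_mul_catalan_eq_choose]
    push_cast
    rw [show 2 * ((k : ℝ) + 1) - 1 = 2 * k + 1 by ring, div_pow, mul_pow, ← pow_mul, pow_succ a,
      show 2 * (k + 1) = 2 * k + 1 + 1 by ring, pow_succ (1 + a)]
    field_simp
  have hvalue : (1 + a) / a * ((1 - √(1 - 4 * (a * s / (1 + a) ^ 2))) / 2) =
      (1 + a) / (2 * a) * (1 - √(1 - 4 * a * s / (1 + a) ^ 2)) := by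
    rw [show 4 * (a * s / (1 + a) ^ 2) = 4 * a * s / (1 + a) ^ 2 by ring]
    ring
  have hsum := (hasSum_catalan_mul_pow_succ hx).mul_left ((1 + a) / a)
  rwa [hterm, hvalue] at hsum

theorem stmt_14 (a : ℝ) (ha0 : 0 < a) (ha1 : a < 1) (s : ℝ)
    (hs : |s| < 1 + (1 - a) ^ 2 / (4 * a)) :
    HasSum
      (fun k : ℕ =>
        (1 / (2 * (k + 1) - 1 : ℝ)) * ((2 * (k + 1) - 1).choose (k + 1) : ℝ) *
          (a ^ k / (1 + a) ^ (2 * (k + 1) - 1)) * s ^ (k + 1))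
      (((1 + a) / (2 * a)) * (1 - Real.sqrt (1 - 4 * a * s / (1 + a) ^ 2))) :=
  stmt_14_general a ha0 s hs
end

section
/- For 0 < a < 1, the numbers p_k = (1/(2k-1))·C(2k-1,k)·a^{k-1}/(1+a)^{2k-1}, k = 1, 2, …, are nonnegative and sum to 1, and Σ_{k=1}^∞ k·p_k = 1/(1-a). -/
/-!
Put `x = a / (1 + a)²`. Since `C(2m+1, m+1) = (2m+1) · catalan m`, we have
`p (m+1) = catalan m · xᵐ / (1 + a)` and `(m+1) · p (m+1) = C(2m, m) · xᵐ / (1 + a)`.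
By the Cauchy product, the Catalan recurrence gives `S = 1 + x S²` for `S = ∑ catalan m · xᵐ`, and
the convolution `2 ∑_{i+j=n} catalan i · C(2j, j) = C(2n+2, n+1)` gives `T = 1 + 2x S T` for
`T = ∑ C(2m, m) · xᵐ`. The quadratic has the roots `1 + a` and `(1 + a) / a`; `S` is the smaller
one because `t ↦ 1 + x t²` maps `[0, 1 + a]` into itself, which bounds the partial sums of `S`.
Hence `S = 1 + a` and `T = (1 + a) / (1 - a)`.
-/

open Finset

theorem choose_two_mul_add_one_succ_eq_mul_catalan (m : ℕ) :
    (2 * m + 1).choose (m + 1) = (2 * m + 1) * catalan m := by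
  refine Nat.eq_of_mul_eq_mul_right (Nat.add_one_pos m) ?_
  rw [← Nat.add_one_mul_choose_eq, ← Nat.centralBinom_eq_two_mul_choose,
    ← succ_mul_catalan_eq_centralBinom]
  ring

theorem two_mul_sum_antidiagonal_catalan_mul_centralBinom (n : ℕ) :
    2 * ∑ ij ∈ antidiagonal n, catalan ij.1 * ij.2.centralBinom = (n + 1).centralBinom := by
  simp only [← succ_mul_catalan_eq_centralBinom]
  calc 2 * ∑ ij ∈ antidiagonal n, catalan ij.1 * ((ij.2 + 1) * catalan ij.2)
      = ∑ ij ∈ antidiagonal n, catalan ij.1 * ((ij.2 + 1) * catalan ij.2)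
        + ∑ ij ∈ antidiagonal n, catalan ij.2 * ((ij.1 + 1) * catalan ij.1) := by
        rw [two_mul, ← Nat.sum_antidiagonal_swap]; rfl
    _ = ∑ ij ∈ antidiagonal n, (n + 2) * (catalan ij.1 * catalan ij.2) := by
        rw [← sum_add_distrib]
        refine sum_congr rfl fun ij hij => ?_
        rw [← mem_antidiagonal.mp hij]
        ring
    _ = (n + 2) * catalan (n + 1) := by rw [← mul_sum, catalan_succ']

theorem sum_range_sum_antidiagonal_mul_le_mul {R : Type*} [CommSemiring R] [PartialOrder R]
    [IsOrderedRing R] {f g : ℕ → R} (hf : ∀ n, 0 ≤ f n) (hg : ∀ n, 0 ≤ g n) (N : ℕ) :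
    ∑ n ∈ range N, ∑ ij ∈ antidiagonal n, f ij.1 * g ij.2
      ≤ (∑ n ∈ range N, f n) * ∑ n ∈ range N, g n := by
  rw [sum_mul_sum]
  simp only [Nat.sum_antidiagonal_eq_sum_range_succ fun i j => f i * g j]
  refine (sum_range_diag_flip N fun i j => f i * g j).trans_le (sum_le_sum fun i _ => ?_)
  exact sum_le_sum_of_subset_of_nonneg (range_subset_range.mpr (Nat.sub_le N i))
    fun _ _ _ => mul_nonneg (hf i) (hg _)

theorem hasSum_of_succ_eq_mul_sum_antidiagonal {R : Type*} [NormedRing R] [CompleteSpace R]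
    {u v w : ℕ → R} (hu : Summable fun n => ‖u n‖) (hv : Summable fun n => ‖v n‖) (c : R)
    (hw : ∀ n, w (n + 1) = c * ∑ ij ∈ antidiagonal n, u ij.1 * v ij.2) :
    HasSum w (w 0 + c * ((∑' n, u n) * ∑' n, v n)) := by
  refine HasSum.zero_add ?_
  simp only [hw]
  rw [tsum_mul_tsum_eq_tsum_sum_antidiagonal_of_summable_norm hu hv]
  exact (summable_norm_sum_mul_antidiagonal_of_summable_norm hu hv).of_norm.hasSum.mul_left c

section PowerSeriesTerms

variable {R : Type*} [CommSemiring R] (x : R)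

theorem catalan_succ_mul_pow (n : ℕ) :
    (catalan (n + 1) : R) * x ^ (n + 1)
      = x * ∑ ij ∈ antidiagonal n, (catalan ij.1 * x ^ ij.1) * (catalan ij.2 * x ^ ij.2) := by
  rw [catalan_succ', Nat.cast_sum, sum_mul, mul_sum]
  refine sum_congr rfl fun ij hij => ?_
  rw [← mem_antidiagonal.mp hij]
  push_cast
  ring

theorem centralBinom_succ_mul_pow (n : ℕ) :
    ((n + 1).centralBinom : R) * x ^ (n + 1)
      = 2 * x * ∑ ij ∈ antidiagonal n,
          (catalan ij.1 * x ^ ij.1) * (ij.2.centralBinom * x ^ ij.2) := by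
  rw [← two_mul_sum_antidiagonal_catalan_mul_centralBinom]
  push_cast
  simp only [mul_sum, sum_mul]
  refine sum_congr rfl fun ij hij => ?_
  rw [← mem_antidiagonal.mp hij]
  ring

end PowerSeriesTerms

theorem sum_range_catalan_mul_pow_le {x r : ℝ} (hx : 0 ≤ x) (hr : 0 ≤ r)
    (hxr : 1 + x * r ^ 2 ≤ r) (N : ℕ) : ∑ m ∈ range N, (catalan m : ℝ) * x ^ m ≤ r := by
  induction N with
  | zero => simpa using hr
  | succ N ih =>
    have hconv := sum_range_sum_antidiagonal_mul_le_mul (f := fun m => (catalan m : ℝ) * x ^ m)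
      (g := fun m => (catalan m : ℝ) * x ^ m) (fun m => by positivity) (fun m => by positivity) N
    have hsq : (∑ m ∈ range N, (catalan m : ℝ) * x ^ m) ^ 2 ≤ r ^ 2 :=
      pow_le_pow_left₀ (sum_nonneg fun m _ => by positivity) ih 2
    rw [sum_range_succ']
    simp only [catalan_succ_mul_pow, ← mul_sum, catalan_zero, Nat.cast_one, pow_zero, mul_one]
    nlinarith [mul_le_mul_of_nonneg_left hconv hx, mul_le_mul_of_nonneg_left hsq hx]

theorem hasSum_catalan_mul_pow {a : ℝ} (ha0 : 0 ≤ a) (ha1 : a ≤ 1) :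
    HasSum (fun m => (catalan m : ℝ) * (a / (1 + a) ^ 2) ^ m) (1 + a) := by
  set x := a / (1 + a) ^ 2 with hx_def
  have hx : x * (1 + a) ^ 2 = a := by rw [hx_def]; field_simp
  have hpartial :=
    sum_range_catalan_mul_pow_le (x := x) (r := 1 + a) (by positivity) (by positivity) (by rw [hx])
  have hsummable : Summable fun m => (catalan m : ℝ) * x ^ m :=
    summable_of_sum_range_le (fun m => by positivity) hpartial
  set S := ∑' m, (catalan m : ℝ) * x ^ m
  have hS_le : S ≤ 1 + a := Real.tsum_le_of_sum_range_le (fun m => by positivity) hpartial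
  have hS_nonneg : 0 ≤ S := tsum_nonneg fun m => by positivity
  have hS_eq : S = 1 + x * (S * S) := by
    have hnorm := summable_norm_iff.mpr hsummable
    simpa using hsummable.hasSum.unique
      (hasSum_of_succ_eq_mul_sum_antidiagonal hnorm hnorm x (catalan_succ_mul_pow x))
  have hroots : (1 + a - S) * (1 + a - a * S) = 0 := by
    linear_combination (-(1 + a) ^ 2) * hS_eq - S ^ 2 * hx
  have hS : S = 1 + a := by
    rcases mul_eq_zero.mp hroots with h | h
    · linarith
    · nlinarith
  exact hS ▸ hsummable.hasSum

theorem hasSum_centralBinom_mul_pow {a : ℝ} (ha0 : 0 ≤ a) (ha1 : a < 1) :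
    HasSum (fun m => (m.centralBinom : ℝ) * (a / (1 + a) ^ 2) ^ m) ((1 + a) / (1 - a)) := by
  set x := a / (1 + a) ^ 2 with hx_def
  have hx : x * (1 + a) ^ 2 = a := by rw [hx_def]; field_simp
  have h4x : 4 * x < 1 := by
    rw [hx_def, mul_div_assoc', div_lt_one (by positivity)]
    nlinarith [sq_pos_of_pos (sub_pos.mpr ha1)]
  have hsummable : Summable fun m => (m.centralBinom : ℝ) * x ^ m := by
    refine (summable_geometric_of_lt_one (by positivity) h4x).of_nonneg_of_le
      (fun m => by positivity) fun m => ?_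
    rw [mul_pow]
    gcongr
    exact_mod_cast m.centralBinom_le_four_pow
  have hcatalan := hasSum_catalan_mul_pow ha0 ha1.le
  set T := ∑' m, (m.centralBinom : ℝ) * x ^ m
  have hT_eq : T = 1 + 2 * x * ((1 + a) * T) := by
    have h := hasSum_of_succ_eq_mul_sum_antidiagonal (w := fun m => (m.centralBinom : ℝ) * x ^ m)
      (summable_norm_iff.mpr hcatalan.summable)
      (summable_norm_iff.mpr hsummable) (2 * x) (centralBinom_succ_mul_pow x)
    rw [hcatalan.tsum_eq] at h
    simpa using hsummable.hasSum.unique h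
  have hT : T = (1 + a) / (1 - a) := by
    rw [eq_div_iff (by linarith)]
    linear_combination (1 + a) * hT_eq + 2 * T * hx
  exact hT ▸ hsummable.hasSum

theorem one_div_mul_choose_mul_pow_div_pow_eq_catalan (a : ℝ) (m : ℕ) :
    1 / (2 * ((m + 1 : ℕ) : ℝ) - 1) * ((2 * (m + 1) - 1).choose (m + 1) : ℝ)
        * (a ^ (m + 1 - 1) / (1 + a) ^ (2 * (m + 1) - 1))
      = catalan m * (a / (1 + a) ^ 2) ^ m / (1 + a) := by
  have hodd : 2 * (m + 1) - 1 = 2 * m + 1 := by omega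
  have hodd' : 2 * ((m + 1 : ℕ) : ℝ) - 1 = 2 * m + 1 := by push_cast; ring
  rw [hodd, hodd', choose_two_mul_add_one_succ_eq_mul_catalan, Nat.add_sub_cancel, div_pow,
    ← pow_mul, pow_succ]
  push_cast
  field_simp

theorem stmt_15 (a : ℝ) (ha0 : 0 < a) (ha1 : a < 1)
    (p : ℕ → ℝ)
    (hp : ∀ k : ℕ, 1 ≤ k →
      p k = (1 / (2 * k - 1 : ℝ)) * ((2 * k - 1).choose k : ℝ) *
        (a ^ (k - 1) / (1 + a) ^ (2 * k - 1))) :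
    (∀ k : ℕ, 1 ≤ k → 0 ≤ p k) ∧
    HasSum (fun k : ℕ => p (k + 1)) 1 ∧
    HasSum (fun k : ℕ => ((k + 1 : ℕ) : ℝ) * p (k + 1)) (1 / (1 - a)) := by
  have hpos : (0 : ℝ) < 1 + a := by linarith
  have hp_catalan (m : ℕ) : p (m + 1) = catalan m * (a / (1 + a) ^ 2) ^ m / (1 + a) := by
    rw [hp (m + 1) (Nat.le_add_left 1 m), one_div_mul_choose_mul_pow_div_pow_eq_catalan]
  refine ⟨fun k hk => ?_, ?_, ?_⟩
  · obtain ⟨m, rfl⟩ := Nat.exists_eq_add_of_le' hk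
    rw [hp_catalan]
    positivity
  · simpa [hp_catalan, div_self hpos.ne'] using
      (hasSum_catalan_mul_pow ha0.le ha1.le).div_const (1 + a)
  · have hmean (m : ℕ) : ((m + 1 : ℕ) : ℝ) * p (m + 1)
        = m.centralBinom * (a / (1 + a) ^ 2) ^ m / (1 + a) := by
      rw [hp_catalan, ← succ_mul_catalan_eq_centralBinom]
      push_cast
      ring
    have hlimit : (1 + a) / (1 - a) / (1 + a) = 1 / (1 - a) := by
      field_simp
    simpa only [hmean, hlimit] using (hasSum_centralBinom_mul_pow ha0.le ha1).div_const (1 + a)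
end

section
/- Let (X_n) be i.i.d. integer-valued with E[X_1] < 0, and S_n the induced walk. Let L be the strict ladder height measure, p = L((0,∞)), and ψ = Σ_{n=0}^∞ L^{n*}. Then p < 1 and for every Borel set A ⊆ [0,∞): P(sup_{n≥0} S_n ∈ A) = (1-p)·ψ(A). -/
/-!
Let `T` be the first time at which the walk attains its supremum; it is a.s. finite because
`S_n → -∞` by the strong law of large numbers. The event `{T = n}` is the intersection of
"`n` is a strict ascending ladder epoch", which depends on `X_0, …, X_{n-1}`, with
"`S_{n+j} ≤ S_n` for all `j`", which is the event `{S_j ≤ 0 ∀ j}` for the shifted walk. These are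
independent, and the shifted walk has the law of the original one, so
`P(sup S ∈ A) = P(S_j ≤ 0 ∀ j) · Σ_n P(S_n ∈ A, n is a ladder epoch)`.
The complement of `{S_j ≤ 0 ∀ j}` is the disjoint union of the events "the first ladder epoch is
`r`", so its probability is `p`. Splitting the `(k+1)`-st ladder epoch at the first one and using
the same independence (the strong Markov property at the first ladder epoch) shows that the law of
the `k`-th ladder height on `{T_k < ∞}` is `L^{k*}`; regrouping the sum over `n` according to the
number of ladder epochs up to `n` gives `ψ(A)`. Finally `A = ℤ` yields `(1 - p) ψ(ℤ) = 1`, so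
`p < 1`.
-/

open MeasureTheory ProbabilityTheory
open scoped ENNReal

open Measure Set Function Finset.HasAntidiagonal

theorem ENNReal.tsum_sum_antidiagonal (f : ℕ × ℕ → ℝ≥0∞) :
    ∑' N, ∑ x ∈ antidiagonal N, f x = ∑' x, f x := by
  rw [← Finset.HasAntidiagonal.sigmaAntidiagonalEquivProd.tsum_eq, ENNReal.tsum_sigma']
  simp only [tsum_fintype, Finset.univ_eq_attach]
  exact tsum_congr fun N => (Finset.sum_attach _ f).symm

theorem MeasureTheory.Measure.sum_conv_sum {M ι κ : Type*} [AddMonoid M] [MeasurableSpace M]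
    [MeasurableAdd₂ M] [Countable κ] (μ : ι → Measure M) (μ' : κ → Measure M)
    [∀ k, SFinite (μ' k)] :
    (Measure.sum μ).conv (Measure.sum μ') = Measure.sum fun x : ι × κ => (μ x.1).conv (μ' x.2) := by
  rw [Measure.conv, Measure.prod_sum, Measure.map_sum measurable_add.aemeasurable]
  rfl

namespace RandomWalk

section Shift

variable {α : Type*}

def shift (n : ℕ) (y : ℕ → α) : ℕ → α := fun i => y (n + i)

def trunc [Zero α] (n : ℕ) (y : ℕ → α) : ℕ → α := fun i => if i < n then y i else 0

lemma preimage_trunc_of_dependsOn [Zero α] {n : ℕ} {E : Set (ℕ → α)}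
    (hE : DependsOn (· ∈ E) (Iio n)) : trunc n ⁻¹' E = E := by
  ext y
  exact eq_iff_iff.1 (hE (x := trunc n y) (y := y) fun i (hi : i < n) => if_pos hi)

variable [MeasurableSpace α]

@[fun_prop]
lemma measurable_shift (n : ℕ) : Measurable (shift (α := α) n) :=
  measurable_pi_lambda _ fun i => measurable_pi_apply (n + i)

@[fun_prop]
lemma measurable_trunc [Zero α] (n : ℕ) : Measurable (trunc (α := α) n) := by
  refine measurable_pi_lambda _ fun i => ?_
  by_cases hi : i < n <;> simp [trunc, hi, measurable_pi_apply]

noncomputable abbrev iidLaw (ν : Measure α) : Measure (ℕ → α) := infinitePi fun _ => ν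

variable (ν : Measure α) [IsProbabilityMeasure ν]

lemma indepFun_trunc_shift [Zero α] (n : ℕ) :
    IndepFun (trunc n) (shift n) (iidLaw ν) := by
  set m : ℕ → MeasurableSpace (ℕ → α) := fun i => MeasurableSpace.comap (· i) inferInstance
  have hcoord : iIndep m (iidLaw ν) :=
    (iIndepFun_iff_iIndep _ _ _).1 (iIndepFun_infinitePi (X := fun _ x => x) fun _ => measurable_id)
  have hmeas_coord {s : Set ℕ} {i : ℕ} (hi : i ∈ s) : Measurable[⨆ j ∈ s, m j] (· i) :=
    (comap_measurable _).mono (le_iSup₂ (f := fun j (_ : j ∈ s) => m j) i hi) le_rfl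
  rw [IndepFun_iff_Indep]
  refine indep_of_indep_of_le_right (indep_of_indep_of_le_left (indep_iSup_of_disjoint
    (fun i => (measurable_pi_apply i).comap_le) hcoord (Iio_disjoint_Ici (le_refl n))) ?_) ?_
  · refine Measurable.comap_le (@measurable_pi_lambda _ _ _ (_) _ _ fun i => ?_)
    by_cases hi : i < n
    · simpa only [trunc, hi, if_true] using hmeas_coord (s := Iio n) hi
    · simpa only [trunc, hi, if_false] using @measurable_const _ _ _ (_) _
  · exact Measurable.comap_le (@measurable_pi_lambda _ _ _ (_) _ _ fun i =>
      hmeas_coord (s := Ici n) (Nat.le_add_right n i))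

lemma map_shift_iidLaw (n : ℕ) :
    (iidLaw ν).map (shift n) = iidLaw ν :=
  map_infinitePi_infinitePi_of_inj (add_right_injective n)

lemma map_trunc_shift_iidLaw [Zero α] (n : ℕ) :
    (iidLaw ν).map (fun y => (trunc n y, shift n y)) =
      ((iidLaw ν).map (trunc n)).prod (iidLaw ν) := by
  rw [(indepFun_iff_map_prod_eq_prod_map_map (by fun_prop) (by fun_prop)).1
    (indepFun_trunc_shift ν n), map_shift_iidLaw]

variable {ν}

lemma map_trunc_shift_restrict_inter [Zero α] {n : ℕ} {E F : Set (ℕ → α)}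
    (hE : MeasurableSet E) (hEn : DependsOn (· ∈ E) (Iio n)) (hF : MeasurableSet F) :
    ((iidLaw ν).restrict (E ∩ shift n ⁻¹' F)).map
        (fun y => (trunc n y, shift n y)) =
      (((iidLaw ν).restrict E).map (trunc n)).prod
        ((iidLaw ν).restrict F) := by
  have hpre : (fun y => (trunc n y, shift n y)) ⁻¹' (E ×ˢ F) = E ∩ shift n ⁻¹' F := by
    rw [Set.mk_preimage_prod, preimage_trunc_of_dependsOn hEn]
  rw [← hpre, ← Measure.restrict_map (by fun_prop) (hE.prod hF), map_trunc_shift_iidLaw,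
    ← Measure.prod_restrict, Measure.restrict_map (by fun_prop) hE, preimage_trunc_of_dependsOn hEn]

lemma measure_inter_shift_preimage [Zero α] {n : ℕ} {E F : Set (ℕ → α)}
    (hE : MeasurableSet E) (hEn : DependsOn (· ∈ E) (Iio n)) (hF : MeasurableSet F) :
    (iidLaw ν) (E ∩ shift n ⁻¹' F) =
      (iidLaw ν) E * (iidLaw ν) F := by
  have h := congrArg (· univ) (map_trunc_shift_restrict_inter (ν := ν) hE hEn hF)
  rw [Measure.map_apply (by fun_prop) .univ, ← univ_prod_univ, Measure.prod_prod,
    Measure.map_apply (by fun_prop) .univ] at h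
  simpa using h

end Shift

section Walk

variable {M : Type*} [AddCommMonoid M]

def walk (y : ℕ → M) (n : ℕ) : M := ∑ i ∈ Finset.range n, y i

@[simp]
lemma walk_zero (y : ℕ → M) : walk y 0 = 0 := Finset.sum_range_zero _

lemma walk_add (y : ℕ → M) (n m : ℕ) : walk y (n + m) = walk y n + walk (shift n y) m :=
  Finset.sum_range_add _ n m

lemma walk_shift {G : Type*} [AddCommGroup G] (y : ℕ → G) (n m : ℕ) :
    walk (shift n y) m = walk y (n + m) - walk y n := by
  rw [walk_add, add_sub_cancel_left]

lemma walk_congr {y y' : ℕ → M} {n k : ℕ} (h : ∀ i < n, y i = y' i) (hk : k ≤ n) :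
    walk y k = walk y' k :=
  Finset.sum_congr rfl fun i hi => h i ((Finset.mem_range.1 hi).trans_le hk)

lemma walk_trunc {y : ℕ → M} {n k : ℕ} (hk : k ≤ n) : walk (trunc n y) k = walk y k :=
  walk_congr (fun _ hi => if_pos hi) hk

variable [MeasurableSpace M] [MeasurableAdd₂ M]

@[fun_prop]
lemma measurable_walk (n : ℕ) : Measurable (walk (M := M) · n) :=
  Finset.measurable_sum _ fun i _ => measurable_pi_apply i

/-- For pairwise disjoint events `E n = {T = n}` of a random time `T`, the law of `S_T` on
`{T < ∞}`. -/
noncomputable def stoppedWalkLaw (P : Measure (ℕ → M)) (E : ℕ → Set (ℕ → M)) : Measure M :=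
  Measure.sum fun n => (P.restrict (E n)).map (walk · n)

lemma stoppedWalkLaw_apply (P : Measure (ℕ → M)) (E : ℕ → Set (ℕ → M)) {A : Set M}
    (hA : MeasurableSet A) : stoppedWalkLaw P E A = ∑' n, P ((walk · n) ⁻¹' A ∩ E n) := by
  simp only [stoppedWalkLaw, Measure.sum_apply _ hA,
    Measure.map_apply (measurable_walk _) hA, Measure.restrict_apply (measurable_walk _ hA)]

/-- `{T + T' ∘ θ_T = N}` for the random times with `{T = r} = E r`, `{T' = m} = F m`, where
`θ_r = shift r`. -/
def stopThen (E F : ℕ → Set (ℕ → M)) (N : ℕ) : Set (ℕ → M) :=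
  ⋃ x ∈ antidiagonal N, E x.1 ∩ shift x.1 ⁻¹' F x.2

variable {ν : Measure M} [IsProbabilityMeasure ν]

lemma map_walk_restrict_inter_shift {n : ℕ} {E F : Set (ℕ → M)}
    (hE : MeasurableSet E) (hEn : DependsOn (· ∈ E) (Iio n)) (hF : MeasurableSet F) (m : ℕ) :
    ((iidLaw ν).restrict (E ∩ shift n ⁻¹' F)).map (walk · (n + m)) =
      (((iidLaw ν).restrict E).map (walk · n)).conv
        (((iidLaw ν).restrict F).map (walk · m)) := by
  have htrunc : ((iidLaw ν).restrict E).map (walk · n) =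
      (((iidLaw ν).restrict E).map (trunc n)).map (walk · n) := by
    rw [Measure.map_map (by fun_prop) (by fun_prop)]
    exact congrArg₂ _ (funext fun y => (walk_trunc le_rfl).symm) rfl
  rw [htrunc, Measure.conv, Measure.map_prod_map _ _ (by fun_prop) (by fun_prop),
    Measure.map_map measurable_add (by fun_prop), ← map_trunc_shift_restrict_inter hE hEn hF,
    Measure.map_map (by fun_prop) (by fun_prop)]
  exact congrArg₂ _ (funext fun y => by simp [walk_add, walk_trunc]) rfl

theorem stoppedWalkLaw_stopThen {E F : ℕ → Set (ℕ → M)} (hE : ∀ r, MeasurableSet (E r))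
    (hEr : ∀ r, DependsOn (· ∈ E r) (Iio r)) (hEdisj : Pairwise (Disjoint on E))
    (hF : ∀ m, MeasurableSet (F m)) :
    stoppedWalkLaw (iidLaw ν) (stopThen E F) =
      (stoppedWalkLaw (iidLaw ν) E).conv
        (stoppedWalkLaw (iidLaw ν) F) := by
  have hpairs : (stoppedWalkLaw (iidLaw ν) E).conv
      (stoppedWalkLaw (iidLaw ν) F) = Measure.sum fun x : ℕ × ℕ =>
        ((iidLaw ν).restrict (E x.1 ∩ shift x.1 ⁻¹' F x.2)).map
          (walk · (x.1 + x.2)) := by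
    rw [stoppedWalkLaw, stoppedWalkLaw, Measure.sum_conv_sum]
    exact congrArg _ (funext fun x => (map_walk_restrict_inter_shift (hE _) (hEr _) (hF _) _).symm)
  ext A hA
  rw [hpairs, stoppedWalkLaw_apply _ _ hA, Measure.sum_apply _ hA, ← ENNReal.tsum_sum_antidiagonal]
  refine tsum_congr fun N => ?_
  rw [stopThen, inter_iUnion₂, measure_biUnion_finset]
  · refine Finset.sum_congr rfl fun x hx => ?_
    rw [Finset.HasAntidiagonal.mem_antidiagonal] at hx
    rw [Measure.map_apply (measurable_walk _) hA, Measure.restrict_apply (measurable_walk _ hA), hx]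
  · intro x hx x' hx' hne
    have hfst : x.1 ≠ x'.1 := fun h => hne (Prod.ext h (by
      rw [Finset.mem_coe, Finset.HasAntidiagonal.mem_antidiagonal] at hx hx'; omega))
    exact ((hEdisj hfst).mono inter_subset_left inter_subset_left).mono
      inter_subset_right inter_subset_right
  · exact fun x _ => (measurable_walk _ hA).inter ((hE _).inter (measurable_shift _ (hF _)))

end Walk

section Ladder

def ladderEpoch (n : ℕ) : Set (ℕ → ℤ) := {y | ∀ k < n, walk y k < walk y n}

def firstLadderEpoch (n : ℕ) : Set (ℕ → ℤ) := {y | (∀ k < n, walk y k ≤ 0) ∧ 0 < walk y n}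

def neverPositive : Set (ℕ → ℤ) := {y | ∀ k, walk y k ≤ 0}

/-- `y ∈ kthLadderEpoch k n` iff `n` is the `k`-th strict ascending ladder epoch of the walk. -/
def kthLadderEpoch : ℕ → ℕ → Set (ℕ → ℤ)
  | 0 => fun n => {_y | n = 0}
  | k + 1 => stopThen firstLadderEpoch (kthLadderEpoch k)

lemma mem_kthLadderEpoch_succ {y : ℕ → ℤ} {k N : ℕ} :
    y ∈ kthLadderEpoch (k + 1) N ↔
      ∃ r m, r + m = N ∧ y ∈ firstLadderEpoch r ∧ shift r y ∈ kthLadderEpoch k m := by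
  simp only [kthLadderEpoch, stopThen, Set.mem_iUnion, Set.mem_inter_iff, Set.mem_preimage,
    Finset.HasAntidiagonal.mem_antidiagonal, Prod.exists, exists_prop]

lemma pos_of_mem_firstLadderEpoch {y : ℕ → ℤ} {r : ℕ} (hy : y ∈ firstLadderEpoch r) : 0 < r :=
  Nat.pos_of_ne_zero fun h => by simpa [h] using hy.2

lemma eq_of_mem_firstLadderEpoch {y : ℕ → ℤ} {r r' : ℕ} (hr : y ∈ firstLadderEpoch r)
    (hr' : y ∈ firstLadderEpoch r') : r = r' := by
  by_contra hne
  rcases Nat.lt_or_gt_of_ne hne with h | h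
  · exact (hr'.1 r h).not_gt hr.2
  · exact (hr.1 r' h).not_gt hr'.2

lemma pairwise_disjoint_firstLadderEpoch : Pairwise (Disjoint on firstLadderEpoch) :=
  fun _ _ hne => Set.disjoint_left.2 fun _ hr hr' => hne (eq_of_mem_firstLadderEpoch hr hr')

lemma nonneg_walk_of_mem_ladderEpoch {y : ℕ → ℤ} {n : ℕ} (hy : y ∈ ladderEpoch n) :
    0 ≤ walk y n := by
  rcases Nat.eq_zero_or_pos n with rfl | hn
  · simp
  · simpa using (hy 0 hn).le

lemma mem_ladderEpoch_add {y : ℕ → ℤ} {r m : ℕ} (hr : y ∈ firstLadderEpoch r)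
    (hm : shift r y ∈ ladderEpoch m) : y ∈ ladderEpoch (r + m) := by
  have hrm : walk y r ≤ walk y (r + m) := by
    simpa [walk_shift] using nonneg_walk_of_mem_ladderEpoch hm
  intro j hj
  rcases lt_or_ge j r with hjr | hrj
  · exact ((hr.1 j hjr).trans_lt hr.2).trans_le hrm
  · obtain ⟨i, rfl⟩ := Nat.exists_eq_add_of_le hrj
    simpa [walk_shift] using hm i (by omega)

lemma exists_firstLadderEpoch_of_mem_ladderEpoch {y : ℕ → ℤ} {n : ℕ} (hn : 0 < n)
    (hy : y ∈ ladderEpoch n) :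
    ∃ r ≤ n, y ∈ firstLadderEpoch r ∧ shift r y ∈ ladderEpoch (n - r) := by
  classical
  have hpos : ∃ r, 0 < walk y r := ⟨n, by simpa using hy 0 hn⟩
  have hrn : Nat.find hpos ≤ n := Nat.find_min' hpos (by simpa using hy 0 hn)
  refine ⟨Nat.find hpos, hrn, ⟨fun k hk => not_lt.1 (Nat.find_min hpos hk), Nat.find_spec hpos⟩,
    fun i hi => ?_⟩
  simpa [walk_shift, Nat.add_sub_cancel' hrn] using hy _ (by omega)

lemma ladderEpoch_of_mem_kthLadderEpoch {y : ℕ → ℤ} {k n : ℕ} (hy : y ∈ kthLadderEpoch k n) :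
    y ∈ ladderEpoch n := by
  induction k generalizing y n with
  | zero =>
    obtain rfl : n = 0 := hy
    exact fun _ h => absurd h (Nat.not_lt_zero _)
  | succ k ih =>
    obtain ⟨r, m, rfl, hr, hm⟩ := mem_kthLadderEpoch_succ.1 hy
    exact mem_ladderEpoch_add hr (ih hm)

lemma exists_mem_kthLadderEpoch {y : ℕ → ℤ} {n : ℕ} (hy : y ∈ ladderEpoch n) :
    ∃ k, y ∈ kthLadderEpoch k n := by
  induction n using Nat.strong_induction_on generalizing y with
  | _ n ih =>
    rcases Nat.eq_zero_or_pos n with rfl | hn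
    · exact ⟨0, rfl⟩
    obtain ⟨r, hrn, hr, hshift⟩ := exists_firstLadderEpoch_of_mem_ladderEpoch hn hy
    obtain ⟨k, hk⟩ := ih (n - r) (by have := pos_of_mem_firstLadderEpoch hr; omega) hshift
    exact ⟨k + 1, mem_kthLadderEpoch_succ.2 ⟨r, n - r, by omega, hr, hk⟩⟩

lemma pos_of_mem_kthLadderEpoch_succ {y : ℕ → ℤ} {k n : ℕ}
    (hy : y ∈ kthLadderEpoch (k + 1) n) : 0 < n := by
  obtain ⟨r, m, rfl, hr, -⟩ := mem_kthLadderEpoch_succ.1 hy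
  exact Nat.add_pos_left (pos_of_mem_firstLadderEpoch hr) m

lemma eq_of_mem_kthLadderEpoch {y : ℕ → ℤ} {k k' n : ℕ} (hk : y ∈ kthLadderEpoch k n)
    (hk' : y ∈ kthLadderEpoch k' n) : k = k' := by
  induction k generalizing y k' n with
  | zero =>
    cases k' with
    | zero => rfl
    | succ k' => exact absurd (hk : n = 0) (pos_of_mem_kthLadderEpoch_succ hk').ne'
  | succ k ih =>
    cases k' with
    | zero => exact absurd (hk' : n = 0) (pos_of_mem_kthLadderEpoch_succ hk).ne'
    | succ k' =>
      obtain ⟨r, m, hrm, hr, hm⟩ := mem_kthLadderEpoch_succ.1 hk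
      obtain ⟨r', m', hrm', hr', hm'⟩ := mem_kthLadderEpoch_succ.1 hk'
      obtain rfl := eq_of_mem_firstLadderEpoch hr hr'
      obtain rfl : m = m' := by omega
      exact congrArg (· + 1) (ih hm hm')

lemma iUnion_kthLadderEpoch (n : ℕ) : ⋃ k, kthLadderEpoch k n = ladderEpoch n :=
  Set.Subset.antisymm (Set.iUnion_subset fun _ _ => ladderEpoch_of_mem_kthLadderEpoch)
    fun _ hy => Set.mem_iUnion.2 (exists_mem_kthLadderEpoch hy)

lemma pairwise_disjoint_kthLadderEpoch (n : ℕ) :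
    Pairwise (Disjoint on fun k => kthLadderEpoch k n) :=
  fun _ _ hne => Set.disjoint_left.2 fun _ hk hk' => hne (eq_of_mem_kthLadderEpoch hk hk')

lemma iUnion_firstLadderEpoch : ⋃ r, firstLadderEpoch r = neverPositiveᶜ := by
  classical
  ext y
  simp only [Set.mem_iUnion, Set.mem_compl_iff, neverPositive, Set.mem_ofPred_eq, not_forall,
    not_le]
  refine ⟨fun ⟨r, hr⟩ => ⟨r, hr.2⟩, fun hpos => ?_⟩
  exact ⟨Nat.find hpos, fun k hk => not_lt.1 (Nat.find_min hpos hk), Nat.find_spec hpos⟩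

lemma dependsOn_mem_ladderEpoch (n : ℕ) : DependsOn (· ∈ ladderEpoch n) (Iio n) := by
  intro y y' h
  have hwalk : ∀ k ≤ n, walk y k = walk y' k := fun k hk => walk_congr h hk
  simp only [ladderEpoch, Set.mem_ofPred_eq, eq_iff_iff]
  exact forall₂_congr fun k hk => by rw [hwalk k hk.le, hwalk n le_rfl]

lemma dependsOn_mem_firstLadderEpoch (n : ℕ) : DependsOn (· ∈ firstLadderEpoch n) (Iio n) := by
  intro y y' h
  have hwalk : ∀ k ≤ n, walk y k = walk y' k := fun k hk => walk_congr h hk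
  simp only [firstLadderEpoch, Set.mem_ofPred_eq, eq_iff_iff]
  rw [hwalk n le_rfl, forall₂_congr fun k hk => by rw [hwalk k (Nat.le_of_lt hk)]]

lemma measurableSet_ladderEpoch (n : ℕ) : MeasurableSet (ladderEpoch n) := by
  simp only [ladderEpoch, Set.ofPred_forall]
  exact MeasurableSet.iInter fun k => MeasurableSet.iInter fun _ =>
    measurableSet_lt (measurable_walk k) (measurable_walk n)

lemma measurableSet_firstLadderEpoch (n : ℕ) : MeasurableSet (firstLadderEpoch n) := by
  simp only [firstLadderEpoch, Set.ofPred_and, Set.ofPred_forall]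
  exact (MeasurableSet.iInter fun k => MeasurableSet.iInter fun _ =>
    measurableSet_le (measurable_walk k) measurable_const).inter
    (measurableSet_lt measurable_const (measurable_walk n))

lemma measurableSet_neverPositive : MeasurableSet neverPositive := by
  simp only [neverPositive, Set.ofPred_forall]
  exact MeasurableSet.iInter fun k => measurableSet_le (measurable_walk k) measurable_const

lemma measurableSet_stopThen {E F : ℕ → Set (ℕ → ℤ)} (hE : ∀ r, MeasurableSet (E r))
    (hF : ∀ m, MeasurableSet (F m)) (N : ℕ) : MeasurableSet (stopThen E F N) :=
  Finset.measurableSet_biUnion _ fun _ _ => (hE _).inter (measurable_shift _ (hF _))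

lemma measurableSet_kthLadderEpoch (k n : ℕ) : MeasurableSet (kthLadderEpoch k n) := by
  induction k generalizing n with
  | zero => exact MeasurableSet.const _
  | succ k ih => exact measurableSet_stopThen measurableSet_firstLadderEpoch ih n

lemma stoppedWalkLaw_kthLadderEpoch_zero (P : Measure (ℕ → ℤ)) [IsProbabilityMeasure P] :
    stoppedWalkLaw P (kthLadderEpoch 0) = dirac 0 := by
  ext A hA
  rw [stoppedWalkLaw_apply _ _ hA, tsum_eq_single 0 fun n hn => by simp [kthLadderEpoch, hn]]
  by_cases h0 : (0 : ℤ) ∈ A <;> simp [kthLadderEpoch, h0]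

lemma sum_stoppedWalkLaw_kthLadderEpoch (P : Measure (ℕ → ℤ)) :
    Measure.sum (fun k => stoppedWalkLaw P (kthLadderEpoch k)) = stoppedWalkLaw P ladderEpoch := by
  ext A hA
  simp only [Measure.sum_apply _ hA, stoppedWalkLaw_apply _ _ hA]
  rw [ENNReal.tsum_comm]
  refine tsum_congr fun n => ?_
  rw [← iUnion_kthLadderEpoch, Set.inter_iUnion, measure_iUnion]
  · exact fun k k' hne => ((pairwise_disjoint_kthLadderEpoch n hne).mono
      Set.inter_subset_right Set.inter_subset_right)
  · exact fun k => (measurable_walk n hA).inter (measurableSet_kthLadderEpoch k n)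

lemma stoppedWalkLaw_firstLadderEpoch_Ioi (P : Measure (ℕ → ℤ)) :
    stoppedWalkLaw P firstLadderEpoch (Set.Ioi 0) = P neverPositiveᶜ := by
  rw [stoppedWalkLaw_apply _ _ measurableSet_Ioi, ← iUnion_firstLadderEpoch,
    measure_iUnion pairwise_disjoint_firstLadderEpoch measurableSet_firstLadderEpoch]
  exact tsum_congr fun r => congrArg P (Set.inter_eq_right.2 fun _ hy => hy.2)

lemma stoppedWalkLaw_map_firstLadderEpoch {Ω : Type*} [MeasurableSpace Ω] {μ : Measure Ω}
    {g : Ω → ℕ → ℤ} (hg : Measurable g) :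
    stoppedWalkLaw (μ.map g) firstLadderEpoch = Measure.sum fun n =>
      (μ.restrict (g ⁻¹' firstLadderEpoch (n + 1))).map (fun ω => walk (g ω) (n + 1)) := by
  have h0 : firstLadderEpoch 0 = ∅ :=
    Set.eq_empty_of_forall_notMem fun _ hy => (pos_of_mem_firstLadderEpoch hy).false
  ext A hA
  rw [stoppedWalkLaw_apply _ _ hA, Measure.sum_apply _ hA, tsum_eq_zero_add' ENNReal.summable, h0,
    Set.inter_empty, measure_empty, zero_add]
  refine tsum_congr fun n => ?_
  have hwalk : Measurable fun ω => walk (g ω) (n + 1) := (measurable_walk _).comp hg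
  rw [Measure.map_apply hwalk hA, Measure.restrict_apply (hwalk hA), Measure.map_apply hg
      ((measurable_walk _ hA).inter (measurableSet_firstLadderEpoch _))]
  rfl

end Ladder

section Maximum

def firstMaxEpoch (n : ℕ) : Set (ℕ → ℤ) := ladderEpoch n ∩ shift n ⁻¹' neverPositive

lemma shift_mem_neverPositive_iff {y : ℕ → ℤ} {n : ℕ} :
    shift n y ∈ neverPositive ↔ ∀ j, walk y (n + j) ≤ walk y n := by
  simp [neverPositive, walk_shift]

lemma walk_le_of_mem_firstMaxEpoch {y : ℕ → ℤ} {n : ℕ} (hy : y ∈ firstMaxEpoch n) (k : ℕ) :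
    walk y k ≤ walk y n := by
  rcases lt_or_ge k n with hk | hk
  · exact (hy.1 k hk).le
  · obtain ⟨j, rfl⟩ := Nat.exists_eq_add_of_le hk
    exact shift_mem_neverPositive_iff.1 hy.2 j

lemma iSup_walk_of_mem_firstMaxEpoch {y : ℕ → ℤ} {n : ℕ} (hy : y ∈ firstMaxEpoch n) :
    ⨆ k, walk y k = walk y n :=
  le_antisymm (ciSup_le (walk_le_of_mem_firstMaxEpoch hy))
    (le_ciSup ⟨walk y n, Set.forall_mem_range.2 (walk_le_of_mem_firstMaxEpoch hy)⟩ n)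

lemma pairwise_disjoint_firstMaxEpoch : Pairwise (Disjoint on firstMaxEpoch) := by
  intro n n' hne
  refine Set.disjoint_left.2 fun y hn hn' => ?_
  rcases Nat.lt_or_gt_of_ne hne with h | h
  · exact (hn'.1 n h).not_ge (walk_le_of_mem_firstMaxEpoch hn n')
  · exact (hn.1 n' h).not_ge (walk_le_of_mem_firstMaxEpoch hn' n)

lemma exists_mem_firstMaxEpoch {y : ℕ → ℤ} (h : ∀ᶠ n in Filter.atTop, walk y n < 0) :
    ∃ n, y ∈ firstMaxEpoch n := by
  classical
  obtain ⟨N, hN⟩ := Filter.eventually_atTop.1 h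
  obtain ⟨n₀, -, hmax⟩ := (Finset.range (N + 1)).exists_max_image (walk y) ⟨0, by simp⟩
  have hbdd : ∃ n, ∀ k, walk y k ≤ walk y n := by
    refine ⟨n₀, fun k => ?_⟩
    rcases le_or_gt k N with hk | hk
    · exact hmax k (Finset.mem_range.2 (Nat.lt_succ_of_le hk))
    · exact (hN k hk.le).le.trans (by simpa using hmax 0 (by simp))
  refine ⟨Nat.find hbdd, fun k hk => (Nat.find_spec hbdd k).lt_of_ne fun heq => ?_,
    shift_mem_neverPositive_iff.2 fun j => Nat.find_spec hbdd _⟩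
  exact Nat.find_min hbdd hk fun j => heq ▸ Nat.find_spec hbdd j

lemma dependsOn_mem_preimage_walk_inter_ladderEpoch (n : ℕ) (A : Set ℤ) :
    DependsOn (· ∈ (walk · n) ⁻¹' A ∩ ladderEpoch n) (Iio n) := by
  intro y y' h
  simp only [Set.mem_inter_iff, Set.mem_preimage, walk_congr h le_rfl,
    dependsOn_mem_ladderEpoch n h]

end Maximum

section Probability

variable {ν : Measure ℤ} [IsProbabilityMeasure ν]

lemma ae_eventually_walk_neg (hint : Integrable (fun x : ℤ => (x : ℝ)) ν)
    (hdrift : ∫ x, (x : ℝ) ∂ν < 0) :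
    ∀ᵐ y ∂(iidLaw ν), ∀ᶠ n in Filter.atTop, walk y n < 0 := by
  have hcast : Measurable (fun x : ℤ => (x : ℝ)) := measurable_of_countable _
  have hlaw (i : ℕ) : (iidLaw ν).map (fun y => (y i : ℝ)) =
      ν.map (fun x : ℤ => (x : ℝ)) :=
    (Measure.map_map hcast (measurable_pi_apply i)).symm.trans (by rw [infinitePi_map_eval])
  have hindep : iIndepFun (fun i (y : ℕ → ℤ) => (y i : ℝ)) (iidLaw ν) :=
    iIndepFun_infinitePi (X := fun _ (x : ℤ) => (x : ℝ)) fun _ => hcast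
  have hint0 : Integrable (fun y : ℕ → ℤ => (y 0 : ℝ)) (iidLaw ν) :=
    (integrable_map_measure hcast.aestronglyMeasurable (measurable_pi_apply 0).aemeasurable).1
      (by rwa [infinitePi_map_eval])
  have hmean : ∫ y, (y 0 : ℝ) ∂(iidLaw ν) = ∫ x, (x : ℝ) ∂ν := by
    rw [← integral_map (measurable_pi_apply 0).aemeasurable hcast.aestronglyMeasurable,
      infinitePi_map_eval]
  have hslln := strong_law_ae _ hint0 (fun i j hij => hindep.indepFun hij) fun i =>
    ⟨(hcast.comp (measurable_pi_apply i)).aemeasurable,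
      (hcast.comp (measurable_pi_apply 0)).aemeasurable, (hlaw i).trans (hlaw 0).symm⟩
  filter_upwards [hslln] with y hy
  filter_upwards [hy.eventually (gt_mem_nhds (hmean ▸ hdrift)), Filter.eventually_gt_atTop 0]
    with n hn hn0
  have hsum : ∑ i ∈ Finset.range n, (y i : ℝ) < 0 :=
    lt_of_mul_lt_mul_left (by simpa using hn) (inv_nonneg.2 (Nat.cast_nonneg n))
  exact_mod_cast (show ((walk y n : ℤ) : ℝ) < 0 by push_cast [walk]; exact hsum)

lemma stoppedWalkLaw_kthLadderEpoch_succ (k : ℕ) :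
    stoppedWalkLaw (iidLaw ν) (kthLadderEpoch (k + 1)) =
      (stoppedWalkLaw (iidLaw ν) (kthLadderEpoch k)).conv
        (stoppedWalkLaw (iidLaw ν) firstLadderEpoch) := by
  rw [kthLadderEpoch, stoppedWalkLaw_stopThen measurableSet_firstLadderEpoch
    dependsOn_mem_firstLadderEpoch pairwise_disjoint_firstLadderEpoch
    (measurableSet_kthLadderEpoch k), Measure.conv_comm]

theorem measure_iSup_walk_mem (hint : Integrable (fun x : ℤ => (x : ℝ)) ν)
    (hdrift : ∫ x, (x : ℝ) ∂ν < 0) (A : Set ℤ) :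
    iidLaw ν {y | ⨆ n, walk y n ∈ A} =
      iidLaw ν neverPositive * stoppedWalkLaw (iidLaw ν) ladderEpoch A := by
  have hmeas (n : ℕ) : MeasurableSet ((walk · n) ⁻¹' A ∩ ladderEpoch n) :=
    (measurable_walk n MeasurableSet.of_discrete).inter (measurableSet_ladderEpoch n)
  have hmax : {y | ⨆ n, walk y n ∈ A} =ᵐ[iidLaw ν]
      ⋃ n, (walk · n) ⁻¹' A ∩ firstMaxEpoch n := by
    filter_upwards [ae_eventually_walk_neg hint hdrift] with y hy
    obtain ⟨n, hn⟩ := exists_mem_firstMaxEpoch hy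
    show (⨆ n, walk y n ∈ A) = (y ∈ ⋃ n, (walk · n) ⁻¹' A ∩ firstMaxEpoch n)
    rw [eq_iff_iff, Set.mem_iUnion]
    exact ⟨fun h => ⟨n, show walk y n ∈ A from iSup_walk_of_mem_firstMaxEpoch hn ▸ h, hn⟩,
      fun ⟨m, hm, hm'⟩ => (iSup_walk_of_mem_firstMaxEpoch hm').symm ▸ hm⟩
  rw [measure_congr hmax, measure_iUnion, stoppedWalkLaw_apply _ _ MeasurableSet.of_discrete,
    ← ENNReal.tsum_mul_left]
  · refine tsum_congr fun n => ?_
    rw [firstMaxEpoch, ← Set.inter_assoc, measure_inter_shift_preimage (hmeas n)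
      (dependsOn_mem_preimage_walk_inter_ladderEpoch n A) measurableSet_neverPositive, mul_comm]
  · exact fun n n' hne => (pairwise_disjoint_firstMaxEpoch hne).mono
      Set.inter_subset_right Set.inter_subset_right
  · intro n
    rw [firstMaxEpoch, ← Set.inter_assoc]
    exact (hmeas n).inter (measurable_shift n measurableSet_neverPositive)

theorem iidLaw_iSup_walk_mem (hint : Integrable (fun x : ℤ => (x : ℝ)) ν)
    (hdrift : ∫ x, (x : ℝ) ∂ν < 0) (A : Set ℤ) :
    iidLaw ν {y | ⨆ n, walk y n ∈ A} =
      (1 - stoppedWalkLaw (iidLaw ν) firstLadderEpoch (Ioi 0)) *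
        stoppedWalkLaw (iidLaw ν) ladderEpoch A := by
  rw [measure_iSup_walk_mem hint hdrift, stoppedWalkLaw_firstLadderEpoch_Ioi,
    prob_compl_eq_one_sub measurableSet_neverPositive,
    ENNReal.sub_sub_cancel ENNReal.one_ne_top prob_le_one]

lemma sum_eq_stoppedWalkLaw_ladderEpoch {Lpow : ℕ → Measure ℤ} (h0 : Lpow 0 = dirac 0)
    (hsucc : ∀ k, Lpow (k + 1) = (Lpow k).conv (stoppedWalkLaw (iidLaw ν) firstLadderEpoch)) :
    Measure.sum Lpow = stoppedWalkLaw (iidLaw ν) ladderEpoch := by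
  have hk (k : ℕ) : Lpow k = stoppedWalkLaw (iidLaw ν) (kthLadderEpoch k) := by
    induction k with
    | zero => rw [h0, stoppedWalkLaw_kthLadderEpoch_zero]
    | succ k ih => rw [hsucc, ih, stoppedWalkLaw_kthLadderEpoch_succ]
  rw [funext hk, sum_stoppedWalkLaw_kthLadderEpoch]

end Probability

end RandomWalk

open RandomWalk

theorem stmt_18 {Ω : Type*} [MeasurableSpace Ω] (μ : Measure Ω) [IsProbabilityMeasure μ]
    (X : ℕ → Ω → ℤ) (hmeas : ∀ n, Measurable (X n))
    (hindep : iIndepFun X μ)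
    (hident : ∀ n, Measure.map (X n) μ = Measure.map (X 0) μ)
    (hint : Integrable (fun ω => (X 0 ω : ℝ)) μ)
    (hdrift : ∫ ω, (X 0 ω : ℝ) ∂μ < 0)
    (S : ℕ → Ω → ℤ) (hS : ∀ n ω, S n ω = ∑ i ∈ Finset.range n, X i ω)
    -- strict ladder height measure
    (L : Measure ℤ)
    (hL : L = Measure.sum (fun n : ℕ =>
      Measure.map (fun ω => S (n + 1) ω)
        (μ.restrict {ω | (∀ k < n + 1, S k ω ≤ 0) ∧ 0 < S (n + 1) ω})))
    (p : ℝ≥0∞) (hp : p = L (Set.Ioi 0))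
    -- convolution powers of L and the renewal measure ψ
    (Lpow : ℕ → Measure ℤ) (hLpow0 : Lpow 0 = Measure.dirac 0)
    (hLpowS : ∀ n, Lpow (n + 1) = (Lpow n).conv L)
    (ψ : Measure ℤ) (hψ : ψ = Measure.sum Lpow) :
    p < 1 ∧
    ∀ A : Set ℤ, A ⊆ Set.Ici 0 →
      μ {ω | (⨆ n, S n ω) ∈ A} = (1 - p) * ψ A := by
  have hpath : Measurable fun ω j => X j ω := measurable_pi_lambda _ hmeas
  have : IsProbabilityMeasure (μ.map (X 0)) := isProbabilityMeasure_map (hmeas 0).aemeasurable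
  have hlaw : μ.map (fun ω j => X j ω) = iidLaw (μ.map (X 0)) :=
    (hindep.map_fun_eq_infinitePi_map hmeas).trans (congrArg _ (funext hident))
  have hcast : Measurable (fun x : ℤ => (x : ℝ)) := measurable_of_countable _
  have hint' : Integrable (fun x : ℤ => (x : ℝ)) (μ.map (X 0)) :=
    (integrable_map_measure hcast.aestronglyMeasurable (hmeas 0).aemeasurable).2 hint
  have hdrift' : ∫ x, (x : ℝ) ∂(μ.map (X 0)) < 0 := by
    rwa [integral_map (hmeas 0).aemeasurable hcast.aestronglyMeasurable]
  obtain rfl : S = fun n ω => walk (fun j => X j ω) n := funext₂ hS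
  have hL' : L = stoppedWalkLaw (iidLaw (μ.map (X 0))) firstLadderEpoch := by
    rw [hL, ← hlaw, stoppedWalkLaw_map_firstLadderEpoch hpath]
    rfl
  have hmain (A : Set ℤ) : μ {ω | ⨆ n, walk (fun j => X j ω) n ∈ A} = (1 - p) * ψ A := by
    have hsup : MeasurableSet {y : ℕ → ℤ | ⨆ n, walk y n ∈ A} :=
      Measurable.iSup measurable_walk MeasurableSet.of_discrete
    change μ ((fun ω j => X j ω) ⁻¹' {y | ⨆ n, walk y n ∈ A}) = _
    rw [← Measure.map_apply hpath hsup, hlaw, iidLaw_iSup_walk_mem hint' hdrift', hp, hψ, ← hL',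
      sum_eq_stoppedWalkLaw_ladderEpoch hLpow0 (hL' ▸ hLpowS)]
  refine ⟨?_, fun A _ => hmain A⟩
  have h1 := hmain Set.univ
  simp only [Set.mem_univ, Set.ofPred_true, measure_univ] at h1
  exact tsub_pos_iff_lt.1 (pos_of_ne_zero (left_ne_zero_of_mul_eq_one h1.symm))
end
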